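/- arXiv:1809.08497 — 3 statements merged into one kernel-verified Lean document; each statement's English description precedes it below -/
import Mathlib

section
/- If S is a subset of ℕ containing 0 and closed under addition, then the complement of S in ℕ is finite if and only if the greatest common divisor of the elements of S is 1 (where gcd of the set is interpreted as the gcd of all elements). -/
/-- For `S ⊆ ℕ` containing `0` and closed under addition, the complement of `S`
is finite iff the gcd of the elements of `S` is `1` (every common divisor of the
elements of `S` divides `1`). -/
theorem complement_finite_iff_gcd_one
    (S : Set ℕ) (h0 : (0 : ℕ) ∈ S)
    (hadd : ∀ x ∈ S, ∀ y ∈ S, x + y ∈ S) :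
    Sᶜ.Finite ↔ ∀ d : ℕ, (∀ s ∈ S, d ∣ s) → d ∣ 1 := by
  have hmul : ∀ (n s : ℕ), s ∈ S → n * s ∈ S := by
    intro n s hs
    induction n with
    | zero => simpa using h0
    | succ k ih => rw [Nat.succ_mul]; exact hadd _ ih _ hs
  constructor
  · intro hfin d hd
    obtain ⟨N, hN⟩ := hfin.bddAbove
    have h1 : N + 1 ∈ S := by
      by_contra h; exact absurd (hN h) (by omega)
    have h2 : N + 2 ∈ S := by
      by_contra h; exact absurd (hN h) (by omega)
    have := Nat.dvd_sub (hd _ h2) (hd _ h1)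
    simpa using this
  · intro hgcd
    set G : Set ℕ := {n | ∃ x ∈ S, ∃ y ∈ S, x = y + n} with hG
    have hSG : ∀ s ∈ S, s ∈ G := fun s hs => ⟨s, hs, 0, h0, by omega⟩
    have hGsub : ∀ m ∈ G, ∀ n ∈ G, n ≤ m → m - n ∈ G := by
      rintro m ⟨x1, hx1, y1, hy1, e1⟩ n ⟨x2, hx2, y2, hy2, e2⟩ hle
      exact ⟨x1 + y2, hadd _ hx1 _ hy2, y1 + x2, hadd _ hy1 _ hx2, by omega⟩
    have hpos : ∃ s ∈ S, 0 < s := by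
      by_contra h
      push_neg at h
      have : (2 : ℕ) ∣ 1 := hgcd 2 (fun s hs => by
        have := h s hs; interval_cases s; exact Dvd.dvd.mul_right dvd_rfl 0)
      omega
    obtain ⟨s0, hs0, hs0pos⟩ := hpos
    have hne : {n | 0 < n ∧ n ∈ G}.Nonempty := ⟨s0, hs0pos, hSG _ hs0⟩
    obtain ⟨d, hdpos, hdG, hdmin⟩ :
        ∃ d, 0 < d ∧ d ∈ G ∧ ∀ k, 0 < k → k ∈ G → d ≤ k :=
      ⟨sInf {n | 0 < n ∧ n ∈ G}, (Nat.sInf_mem hne).1, (Nat.sInf_mem hne).2,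
        fun k hk1 hk2 => Nat.sInf_le ⟨hk1, hk2⟩⟩
    have hdvd : ∀ g ∈ G, d ∣ g := by
      intro g hg
      have key : ∀ k, k * d ≤ g → g - k * d ∈ G := by
        intro k
        induction k with
        | zero => intro _; simpa using hg
        | succ j ih =>
          intro hle
          have e : (j + 1) * d = j * d + d := by ring
          have h1 : g - (j + 1) * d = (g - j * d) - d := by omega
          rw [h1]
          exact hGsub _ (ih (by omega)) _ hdG (by omega)
      have hdm : d * (g / d) + g % d = g := Nat.div_add_mod g d
      have e2 : g / d * d = d * (g / d) := by ring
      have hmem := key (g / d) (by omega)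
      have hlt : g % d < d := Nat.mod_lt g hdpos
      rcases Nat.eq_zero_or_pos (g % d) with h | h
      · exact Nat.dvd_of_mod_eq_zero h
      · have : g - g / d * d = g % d := by omega
        rw [this] at hmem
        exact absurd (hdmin _ h hmem) (by omega)
    have hd1 : d = 1 := by
      exact Nat.dvd_one.mp (hgcd d (fun s hs => hdvd s (hSG s hs)))
    rw [hd1] at hdG
    obtain ⟨x, hx, y, hy, hxy⟩ := hdG
    rcases Nat.eq_zero_or_pos y with hy0 | hy0
    · subst hy0
      have h1S : (1 : ℕ) ∈ S := by simpa [hxy] using hx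
      have : Sᶜ = ∅ := by
        ext n; simp only [Set.mem_compl_iff, Set.mem_empty_iff_false, iff_false, not_not]
        simpa using hmul n 1 h1S
      rw [this]; exact Set.finite_empty
    · have hbig : ∀ n, y * y ≤ n → n ∈ S := by
        intro n hn
        have hr : n % y < y := Nat.mod_lt n hy0
        have hq : y ≤ n / y := Nat.le_div_iff_mul_le hy0 |>.2 (by nlinarith)
        have hdm := Nat.div_add_mod n y
        have hrep : n = (n % y) * (y + 1) + (n / y - n % y) * y := by
          have h1 : n % y ≤ n / y := by omega
          have h2 : (n / y - n % y) * y = n / y * y - n % y * y :=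
            Nat.sub_mul _ _ _
          have h3 : n / y * y = y * (n / y) := by ring
          have h4 : n % y * y ≤ n / y * y := Nat.mul_le_mul_right _ h1
          have h5 : (n % y) * (y + 1) = n % y * y + n % y := by ring
          omega
        rw [hrep]
        exact hadd _ (hmul _ _ (hxy ▸ hx)) _ (hmul _ _ hy)
      exact Set.Finite.subset (Set.finite_Iio (y * y))
        (fun n hn => by by_contra h; exact hn (hbig n (by simpa using h)))
end

section
/- Let S = ⟨n₁,…,n_p⟩, fix j, and for k ≠ j let x̄ₖ be the smallest positive integer xₖ such that nₖ·xₖ − nⱼ ∈ S. Then such x̄ₖ exists, and the vector x̄ₖ·eₖ ∈ ℕᵖ (x̄ₖ in coordinate k, zeros elsewhere) is a componentwise-minimal element of D(nⱼ) = { x ∈ ℕᵖ : ∑ᵢ nᵢ xᵢ − nⱼ ∈ S }. -/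
/-- Initialization lemma: for `k ≠ j` there is a least positive integer `m` with
`n k · m − n j ∈ S`, and `m • e k` is a componentwise-minimal element of `D(n j)`. -/
theorem initial_bound_minimal
    {p : ℕ} (n : Fin p → ℕ)
    (hpos : ∀ i, 0 < n i)
    (hgcd : Finset.univ.gcd n = 1)
    (S : Set ℕ) (hS : S = {s : ℕ | ∃ x : Fin p → ℕ, ∑ i, n i * x i = s})
    (j k : Fin p) (hjk : k ≠ j) :
    ∃ m : ℕ, 1 ≤ m ∧ (∃ t ∈ S, n k * m = n j + t) ∧
      (∀ m' : ℕ, 1 ≤ m' → (∃ t ∈ S, n k * m' = n j + t) → m ≤ m') ∧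
      ((∃ t ∈ S, ∑ i, n i * (fun i => if i = k then m else 0) i = n j + t) ∧
        ∀ y : Fin p → ℕ, (∃ t ∈ S, ∑ i, n i * y i = n j + t) →
          y ≤ (fun i => if i = k then m else 0) → y = (fun i => if i = k then m else 0)) := by
  have hsum : ∀ c : ℕ, ∑ i, n i * (fun i => if i = k then c else 0) i = n k * c := by
    intro c
    simp [mul_ite, Finset.sum_ite_eq']
  -- the predicate
  set P : ℕ → Prop := fun m => 1 ≤ m ∧ ∃ t ∈ S, n k * m = n j + t with hP
  have hPex : ∃ m, P m := by
    refine ⟨n j, hpos j, n j * (n k - 1), ?_, ?_⟩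
    · rw [hS]
      exact ⟨fun i => if i = j then n k - 1 else 0, by simp [mul_ite, Finset.sum_ite_eq']⟩
    · have : 1 ≤ n k := hpos k
      cases' Nat.exists_eq_add_of_le this with c hc
      rw [hc, Nat.add_sub_cancel_left]
      ring
  classical
  obtain ⟨m, hm, hmin⟩ := Nat.findX hPex
  refine ⟨m, hm.1, hm.2, ?_, ?_, ?_⟩
  · intro m' hm'1 hm'2
    by_contra h
    exact hmin m' (by omega) ⟨hm'1, hm'2⟩
  · rw [hsum]; exact hm.2
  · intro y ⟨t, ht, hty⟩ hle
    have hy0 : ∀ i, i ≠ k → y i = 0 := by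
      intro i hi
      have := hle i
      simpa [hi] using this
    have hyk : ∑ i, n i * y i = n k * y k := by
      rw [Finset.sum_eq_single k]
      · intro i _ hi; simp [hy0 i hi]
      · simp
    have hyk1 : 1 ≤ y k := by
      by_contra h
      have : y k = 0 := by omega
      rw [hyk, this] at hty
      have := hpos j
      omega
    have hle' : m ≤ y k := by
      by_contra h
      exact hmin (y k) (by omega) ⟨hyk1, t, ht, by rw [← hyk, hty]⟩
    have hle2 : y k ≤ m := by simpa using hle k
    have : y k = m := le_antisymm hle2 hle'
    funext i
    by_cases hi : i = k
    · subst hi; simp [this]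
    · simp [hi, hy0 i hi]
end

section
/- Let S = ⟨n₁,…,n_p⟩ and fix j. Then ω(S,nⱼ) ≥ max_{k ≠ j} x̄ₖ, where x̄ₖ = min{ x ∈ ℕ, x ≥ 1 : nₖ·x − nⱼ ∈ S } and ω(S,nⱼ) = max{ ∑ᵢ xᵢ : x a componentwise-minimal element of { x ∈ ℕᵖ : ∑ᵢ nᵢ xᵢ − nⱼ ∈ S } }. -/
/-- Lower bound for the ω-invariant: `ω(S, n j) ≥ x̄ k` for every `k ≠ j`, where
`x̄ k` is the least positive integer `m` with `n k · m − n j ∈ S`. -/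
theorem omega_lower_bound
    {p : ℕ} (n : Fin p → ℕ)
    (hp : 2 ≤ p)
    (hpos : ∀ i, 0 < n i)
    (hgcd : Finset.univ.gcd n = 1)
    (S : Set ℕ) (hS : S = {s : ℕ | ∃ x : Fin p → ℕ, ∑ i, n i * x i = s})
    (j : Fin p) (xbar : Fin p → ℕ)
    (hxbar : ∀ k : Fin p, k ≠ j →
      1 ≤ xbar k ∧ (∃ t ∈ S, n k * xbar k = n j + t) ∧
        ∀ m : ℕ, 1 ≤ m → (∃ t ∈ S, n k * m = n j + t) → xbar k ≤ m)
    (ω : ℕ)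
    (hω : IsGreatest
      {v : ℕ | ∃ x : Fin p → ℕ,
        ((∃ t ∈ S, ∑ i, n i * x i = n j + t) ∧
          ∀ y : Fin p → ℕ, (∃ t ∈ S, ∑ i, n i * y i = n j + t) → y ≤ x → y = x) ∧
        ∑ i, x i = v} ω) :
    ∀ k : Fin p, k ≠ j → xbar k ≤ ω := by
  intro k hk
  obtain ⟨h1, ⟨t, ht, hteq⟩, hmin⟩ := hxbar k hk
  set x : Fin p → ℕ := fun i => if i = k then xbar k else 0 with hx
  have hsum : ∀ z : Fin p → ℕ, (∀ i, i ≠ k → z i = 0) →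
      ∑ i, n i * z i = n k * z k := by
    intro z hz
    rw [Finset.sum_eq_single k]
    · intro b _ hb; rw [hz b hb, mul_zero]
    · intro h; exact absurd (Finset.mem_univ k) h
  have hxsum : ∑ i, n i * x i = n k * xbar k := by
    rw [hsum x (fun i hi => by simp [hx, hi])]; simp [hx]
  apply hω.2
  refine ⟨x, ⟨⟨t, ht, by rw [hxsum]; exact hteq⟩, ?_⟩, ?_⟩
  · intro y ⟨s, hs, hseq⟩ hyx
    have hy0 : ∀ i, i ≠ k → y i = 0 := by
      intro i hi
      have := hyx i
      simp [hx, hi] at this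
      omega
    have hysum : ∑ i, n i * y i = n k * y k := hsum y hy0
    rw [hysum] at hseq
    have hyk1 : 1 ≤ y k := by
      rcases Nat.eq_zero_or_pos (y k) with h0 | h
      · exfalso; rw [h0, mul_zero] at hseq; have := hpos j; omega
      · exact h
    have hge : xbar k ≤ y k := hmin (y k) hyk1 ⟨s, hs, hseq⟩
    have hle : y k ≤ xbar k := by have := hyx k; simpa [hx] using this
    funext i
    by_cases hi : i = k
    · subst hi; simp [hx]; omega
    · simp [hx, hi, hy0 i hi]
  · rw [Finset.sum_eq_single k]
    · simp [hx]
    · intro b _ hb; simp [hx, hb]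
    · intro h; exact absurd (Finset.mem_univ k) h
end
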